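/- Let H and H' be complex Hilbert spaces, each equipped with an orthogonal decomposition indexed by the same set L: families (H_ℓ)_{ℓ∈L} and (H'_ℓ)_{ℓ∈L} of mutually orthogonal closed subspaces with dense algebraic span, with orthogonal projections P_ℓ and P'_ℓ. Let A : H → H' be a bounded operator, let c : L → ℂ be a bounded function, and let M : H → H and M' : H' → H' be bounded operators satisfying M v = c(ℓ)·v for all v ∈ H_ℓ and M' w = c(ℓ)·w for all w ∈ H'_ℓ. Let R ∈ ℕ and δ ≥ 0, and set S := {(ℓ',ℓ) ∈ L × L : P'_{ℓ'} ∘ A ∘ P_ℓ ≠ 0}. Assume: for every ℓ the set {ℓ' : (ℓ',ℓ) ∈ S} has at most R elements; for every ℓ' the set {ℓ : (ℓ',ℓ) ∈ S} has at most R elements; and |c(ℓ') − c(ℓ)| ≤ δ for all (ℓ',ℓ) ∈ S. Then ‖M' ∘ A − A ∘ M‖ ≤ R·δ·‖A‖. -/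

import Mathlib

/-- An orthogonal decomposition of a complex Hilbert space indexed by `I`, presented by the
family of orthogonal projections onto its members: a family of mutually orthogonal
self-adjoint idempotents whose ranges have dense algebraic span. -/
structure OrthogonalDecomposition {I H : Type*} [NormedAddCommGroup H]
    [InnerProductSpace ℂ H] [CompleteSpace H] (P : I → (H →L[ℂ] H)) : Prop where
  isSelfAdjoint : ∀ i, IsSelfAdjoint (P i)
  idempotent : ∀ i, (P i).comp (P i) = P i
  orthogonal : ∀ i j, i ≠ j → (P i).comp (P j) = 0
  denseSpan : Dense (((⨆ i, LinearMap.range (P i : H →ₗ[ℂ] H)) : Submodule ℂ H) : Set H)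

/-!
Because `M` and `M'` act diagonally, the commutator `D = M' ∘ A - A ∘ M` has blocks
`P'_{ℓ'} D P_ℓ = (c ℓ' - c ℓ) • P'_{ℓ'} A P_ℓ`. For `v` with finitely many nonzero components,
Pythagoras in `H'` and Cauchy–Schwarz over the at most `R` indices `ℓ` with a nonzero block in
row `ℓ'` give `‖D v‖² ≤ R δ² ∑_ℓ ‖A P_ℓ v‖² ≤ R δ² ‖A‖² ‖v‖²`. Such `v` are dense, so in fact
`‖D‖ ≤ √R δ ‖A‖`.
-/

namespace OrthogonalDecomposition

variable {I H : Type*} [NormedAddCommGroup H] [InnerProductSpace ℂ H] [CompleteSpace H]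
  {P : I → (H →L[ℂ] H)}

theorem apply_apply_self (hP : OrthogonalDecomposition P) (i : I) (x : H) :
    P i (P i x) = P i x :=
  DFunLike.congr_fun (hP.idempotent i) x

theorem apply_apply_of_ne (hP : OrthogonalDecomposition P) {i j : I} (hij : i ≠ j) (x : H) :
    P i (P j x) = 0 :=
  DFunLike.congr_fun (hP.orthogonal i j hij) x

theorem inner_apply_left (hP : OrthogonalDecomposition P) (i : I) (x y : H) :
    inner ℂ (P i x) y = inner ℂ x (P i y) :=
  (hP.isSelfAdjoint i).isSymmetric x y

theorem orthogonalFamily (hP : OrthogonalDecomposition P) :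
    OrthogonalFamily ℂ (fun i => LinearMap.range (P i : H →ₗ[ℂ] H))
      fun i => (LinearMap.range (P i : H →ₗ[ℂ] H)).subtypeₗᵢ :=
  OrthogonalFamily.of_pairwise fun i j hij => Submodule.isOrtho_iff_inner_eq.mpr <| by
    rintro _ ⟨x, rfl⟩ _ ⟨y, rfl⟩
    simp [hP.inner_apply_left, hP.apply_apply_of_ne hij]

theorem norm_sum_apply_sq_eq_sum (hP : OrthogonalDecomposition P) (s : Finset I) (x : I → H) :
    ‖∑ i ∈ s, P i (x i)‖ ^ 2 = ∑ i ∈ s, ‖P i (x i)‖ ^ 2 :=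
  hP.orthogonalFamily.norm_sum (fun i => ⟨P i (x i), x i, rfl⟩) s

theorem eq_zero_of_forall_apply_eq_zero (hP : OrthogonalDecomposition P) {y : H}
    (hy : ∀ i, P i y = 0) : y = 0 := by
  have hperp : (⨆ i, LinearMap.range (P i : H →ₗ[ℂ] H))ᗮ = ⊥ :=
    Submodule.topologicalClosure_eq_top_iff.mp
      (Submodule.dense_iff_topologicalClosure_eq_top.mp hP.denseSpan)
  have hy' : y ∈ (⨆ i, LinearMap.range (P i : H →ₗ[ℂ] H))ᗮ := by
    rw [← Submodule.iInf_orthogonal, Submodule.mem_iInf]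
    rintro i _ ⟨x, rfl⟩
    simp [hP.inner_apply_left, hy i]
  simpa [hperp] using hy'

theorem sum_apply_eq_self (hP : OrthogonalDecomposition P) {s : Finset I} {x : H}
    (hx : ∀ j ∉ s, P j x = 0) : ∑ i ∈ s, P i x = x := by
  refine (sub_eq_zero.mp (hP.eq_zero_of_forall_apply_eq_zero fun j => ?_)).symm
  rw [map_sub, map_sum]
  by_cases hj : j ∈ s
  · rw [Finset.sum_eq_single_of_mem j hj fun i _ hij => hP.apply_apply_of_ne hij.symm x,
      hP.apply_apply_self, sub_self]
  · rw [hx j hj, zero_sub, neg_eq_zero]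
    exact Finset.sum_eq_zero fun i hi => hP.apply_apply_of_ne (ne_of_mem_of_not_mem hi hj).symm x

theorem norm_sq_eq_sum (hP : OrthogonalDecomposition P) {s : Finset I} {x : H}
    (hx : ∀ j ∉ s, P j x = 0) : ‖x‖ ^ 2 = ∑ i ∈ s, ‖P i x‖ ^ 2 := by
  conv_lhs => rw [← hP.sum_apply_eq_self hx]
  exact hP.norm_sum_apply_sq_eq_sum s fun _ => x

theorem exists_finset_apply_eq_zero_of_mem_iSup (hP : OrthogonalDecomposition P) {v : H}
    (hv : v ∈ ⨆ i, LinearMap.range (P i : H →ₗ[ℂ] H)) : ∃ s : Finset I, ∀ j ∉ s, P j v = 0 := by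
  classical
  induction hv using Submodule.iSup_induction' with
  | mem i _ hu =>
    obtain ⟨x, rfl⟩ := hu
    exact ⟨{i}, fun j hj => hP.apply_apply_of_ne (Finset.notMem_singleton.mp hj) x⟩
  | zero => exact ⟨∅, fun j _ => map_zero _⟩
  | add u w _ _ hu hw =>
    obtain ⟨s, hs⟩ := hu
    obtain ⟨t, ht⟩ := hw
    refine ⟨s ∪ t, fun j hj => ?_⟩
    rw [Finset.mem_union, not_or] at hj
    rw [map_add, hs j hj.1, ht j hj.2, add_zero]

theorem comp_eq_smul_of_apply_eq_smul (hP : OrthogonalDecomposition P) {M : H →L[ℂ] H}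
    {c : I → ℂ} (hM : ∀ i x, P i x = x → M x = c i • x) (i : I) :
    (P i).comp M = c i • P i := by
  have hspan : Dense (Submodule.span ℂ (⋃ j, Set.range (P j)) : Set H) := by
    simpa only [Submodule.iSup_eq_span, LinearMap.coe_range, ContinuousLinearMap.coe_coe]
      using hP.denseSpan
  refine ContinuousLinearMap.ext_on hspan ?_
  rintro _ ⟨_, ⟨j, rfl⟩, x, rfl⟩
  have hMj : M (P j x) = c j • P j x := hM j _ (hP.apply_apply_self j x)
  by_cases hij : i = j
  · subst hij
    simp [hMj]
  · simp [hMj, hP.apply_apply_of_ne hij]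

end OrthogonalDecomposition

theorem norm_sum_sq_le_of_ncard_le {ι E : Type*} [SeminormedAddCommGroup E] {y : ι → E}
    {C : Set ι} {R : ℕ} (hC : C.Finite) (hCR : C.ncard ≤ R) (hy : ∀ i ∉ C, y i = 0)
    (s : Finset ι) : ‖∑ i ∈ s, y i‖ ^ 2 ≤ R * ∑ i ∈ s, ‖y i‖ ^ 2 := by
  classical
  set t := s.filter (· ∈ C)
  have hsum : ∑ i ∈ t, y i = ∑ i ∈ s, y i :=
    Finset.sum_filter_of_ne fun i _ hi => by_contra fun hiC => hi (hy i hiC)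
  have ht : (t.card : ℝ) ≤ R := by
    have : t.card ≤ C.ncard := by
      rw [← Set.ncard_coe_finset]
      exact Set.ncard_le_ncard (fun i hi => (Finset.mem_filter.mp hi).2) hC
    exact_mod_cast this.trans hCR
  calc ‖∑ i ∈ s, y i‖ ^ 2 = ‖∑ i ∈ t, y i‖ ^ 2 := by rw [hsum]
    _ ≤ (∑ i ∈ t, ‖y i‖) ^ 2 := by gcongr; exact norm_sum_le _ _
    _ ≤ t.card * ∑ i ∈ t, ‖y i‖ ^ 2 := sq_sum_le_card_mul_sum_sq
    _ ≤ R * ∑ i ∈ s, ‖y i‖ ^ 2 := by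
      gcongr
      exact Finset.filter_subset _ _

theorem ContinuousLinearMap.opNorm_le_of_dense {𝕜 E F : Type*} [NontriviallyNormedField 𝕜]
    [SeminormedAddCommGroup E] [SeminormedAddCommGroup F] [NormedSpace 𝕜 E] [NormedSpace 𝕜 F]
    (f : E →L[𝕜] F) {s : Set E} (hs : Dense s) {K : ℝ} (hK : 0 ≤ K)
    (h : ∀ x ∈ s, ‖f x‖ ≤ K * ‖x‖) : ‖f‖ ≤ K :=
  f.opNorm_le_bound hK (hs.induction h (isClosed_le (by fun_prop) (by fun_prop)))

theorem Real.sqrt_natCast_le (n : ℕ) : √(n : ℝ) ≤ n :=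
  (Real.sqrt_le_left (Nat.cast_nonneg n)).mpr (mod_cast Nat.le_self_pow two_ne_zero n)

section Blocks

variable {L H H' : Type*} [NormedAddCommGroup H] [InnerProductSpace ℂ H] [CompleteSpace H]
  [NormedAddCommGroup H'] [InnerProductSpace ℂ H'] [CompleteSpace H']
  {P : L → (H →L[ℂ] H)} {P' : L → (H' →L[ℂ] H')} {A T : H →L[ℂ] H'} {R : ℕ} {δ : ℝ}

theorem norm_apply_sq_le_of_blocks (hP : OrthogonalDecomposition P)
    (hP' : OrthogonalDecomposition P')
    (hrow : ∀ ℓ, {ℓ' : L | (P' ℓ').comp (A.comp (P ℓ)) ≠ 0}.Finite)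
    (hcol : ∀ ℓ', {ℓ : L | (P' ℓ').comp (A.comp (P ℓ)) ≠ 0}.Finite ∧
      {ℓ : L | (P' ℓ').comp (A.comp (P ℓ)) ≠ 0}.ncard ≤ R)
    (hT : ∀ ℓ' ℓ x, ‖P' ℓ' (T (P ℓ x))‖ ≤ δ * ‖P' ℓ' (A (P ℓ x))‖)
    {v : H} (hv : v ∈ ⨆ ℓ, LinearMap.range (P ℓ : H →ₗ[ℂ] H)) :
    ‖T v‖ ^ 2 ≤ R * δ ^ 2 * (‖A‖ * ‖v‖) ^ 2 := by
  classical
  have hTA : ∀ ℓ' ℓ, (P' ℓ').comp (A.comp (P ℓ)) = 0 → ∀ x, P' ℓ' (T (P ℓ x)) = 0 :=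
    fun ℓ' ℓ h x => by
      have hA : P' ℓ' (A (P ℓ x)) = 0 := DFunLike.congr_fun h x
      simpa [hA] using hT ℓ' ℓ x
  obtain ⟨s, hs⟩ := hP.exists_finset_apply_eq_zero_of_mem_iSup hv
  set s' := s.biUnion fun ℓ => (hrow ℓ).toFinset
  have hs' : ∀ ℓ ∈ s, ∀ ℓ' ∉ s', (P' ℓ').comp (A.comp (P ℓ)) = 0 := fun ℓ hℓ ℓ' hℓ' =>
    by_contra fun h => hℓ' (Finset.mem_biUnion.mpr ⟨ℓ, hℓ, (hrow ℓ).mem_toFinset.mpr h⟩)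
  have hTv : ∀ ℓ', P' ℓ' (T v) = ∑ ℓ ∈ s, P' ℓ' (T (P ℓ v)) := fun ℓ' => by
    conv_lhs => rw [← hP.sum_apply_eq_self hs]
    simp only [map_sum]
  have hrow_sq : ∀ ℓ', ‖P' ℓ' (T v)‖ ^ 2 ≤ R * (δ ^ 2 * ∑ ℓ ∈ s, ‖P' ℓ' (A (P ℓ v))‖ ^ 2) :=
    fun ℓ' => by
      rw [hTv, Finset.mul_sum]
      refine (norm_sum_sq_le_of_ncard_le (hcol ℓ').1 (hcol ℓ').2
        (fun ℓ hℓ => hTA ℓ' ℓ (not_not.mp hℓ) v) s).trans ?_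
      gcongr with ℓ
      rw [← mul_pow]
      exact pow_le_pow_left₀ (norm_nonneg _) (hT ℓ' ℓ v) 2
  calc ‖T v‖ ^ 2 = ∑ ℓ' ∈ s', ‖P' ℓ' (T v)‖ ^ 2 :=
        hP'.norm_sq_eq_sum fun ℓ' hℓ' => by
          rw [hTv]
          exact Finset.sum_eq_zero fun ℓ hℓ => hTA ℓ' ℓ (hs' ℓ hℓ ℓ' hℓ') v
    _ ≤ ∑ ℓ' ∈ s', R * (δ ^ 2 * ∑ ℓ ∈ s, ‖P' ℓ' (A (P ℓ v))‖ ^ 2) :=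
        Finset.sum_le_sum fun ℓ' _ => hrow_sq ℓ'
    _ = R * δ ^ 2 * ∑ ℓ ∈ s, ‖A (P ℓ v)‖ ^ 2 := by
        rw [← Finset.mul_sum, ← Finset.mul_sum, Finset.sum_comm, mul_assoc]
        congr 2
        refine Finset.sum_congr rfl fun ℓ hℓ => (hP'.norm_sq_eq_sum fun ℓ' hℓ' => ?_).symm
        exact DFunLike.congr_fun (hs' ℓ hℓ ℓ' hℓ') v
    _ ≤ R * δ ^ 2 * ∑ ℓ ∈ s, (‖A‖ * ‖P ℓ v‖) ^ 2 := by
        gcongr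
        exact A.le_opNorm _
    _ = R * δ ^ 2 * (‖A‖ * ‖v‖) ^ 2 := by
        simp_rw [mul_pow, ← Finset.mul_sum, ← hP.norm_sq_eq_sum hs]

theorem opNorm_le_sqrt_mul_of_blocks (hP : OrthogonalDecomposition P)
    (hP' : OrthogonalDecomposition P')
    (hrow : ∀ ℓ, {ℓ' : L | (P' ℓ').comp (A.comp (P ℓ)) ≠ 0}.Finite)
    (hcol : ∀ ℓ', {ℓ : L | (P' ℓ').comp (A.comp (P ℓ)) ≠ 0}.Finite ∧
      {ℓ : L | (P' ℓ').comp (A.comp (P ℓ)) ≠ 0}.ncard ≤ R)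
    (hT : ∀ ℓ' ℓ x, ‖P' ℓ' (T (P ℓ x))‖ ≤ δ * ‖P' ℓ' (A (P ℓ x))‖) (hδ : 0 ≤ δ) :
    ‖T‖ ≤ √R * δ * ‖A‖ := by
  refine T.opNorm_le_of_dense hP.denseSpan (by positivity) fun v hv => ?_
  refine le_of_pow_le_pow_left₀ two_ne_zero (by positivity) ?_
  calc ‖T v‖ ^ 2 ≤ R * δ ^ 2 * (‖A‖ * ‖v‖) ^ 2 :=
        norm_apply_sq_le_of_blocks hP hP' hrow hcol hT hv
    _ = (√R * δ * ‖A‖ * ‖v‖) ^ 2 := by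
        simp only [mul_pow, Real.sq_sqrt (Nat.cast_nonneg R)]
        ring

theorem comp_commutator_comp_eq_smul (hP : OrthogonalDecomposition P)
    (hP' : OrthogonalDecomposition P') {c : L → ℂ} {M : H →L[ℂ] H} {M' : H' →L[ℂ] H'}
    (hM : ∀ ℓ v, P ℓ v = v → M v = c ℓ • v) (hM' : ∀ ℓ w, P' ℓ w = w → M' w = c ℓ • w)
    (ℓ' ℓ : L) :
    (P' ℓ').comp ((M'.comp A - A.comp M).comp (P ℓ)) =
      (c ℓ' - c ℓ) • (P' ℓ').comp (A.comp (P ℓ)) := by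
  ext x
  have hMℓ : M (P ℓ x) = c ℓ • P ℓ x := hM ℓ _ (hP.apply_apply_self ℓ x)
  have hM'ℓ' := DFunLike.congr_fun (hP'.comp_eq_smul_of_apply_eq_smul hM' ℓ') (A (P ℓ x))
  simp only [ContinuousLinearMap.comp_apply, smul_apply, sub_apply] at hM'ℓ' ⊢
  rw [map_sub, hM'ℓ', hMℓ, map_smul, map_smul, sub_smul]

end Blocks

theorem block_commutator_estimate_general
    {L : Type*} {H H' : Type*}
    [NormedAddCommGroup H] [InnerProductSpace ℂ H] [CompleteSpace H]
    [NormedAddCommGroup H'] [InnerProductSpace ℂ H'] [CompleteSpace H']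
    (P : L → (H →L[ℂ] H)) (P' : L → (H' →L[ℂ] H'))
    (hP : OrthogonalDecomposition P) (hP' : OrthogonalDecomposition P')
    (A : H →L[ℂ] H')
    (c : L → ℂ)
    (M : H →L[ℂ] H) (M' : H' →L[ℂ] H')
    (hM : ∀ (ℓ : L) (v : H), P ℓ v = v → M v = c ℓ • v)
    (hM' : ∀ (ℓ : L) (w : H'), P' ℓ w = w → M' w = c ℓ • w)
    (R : ℕ) (δ : ℝ) (hδ : 0 ≤ δ)
    -- the rows of the block support of `A` have at most `R` elements
    (hrow : ∀ ℓ : L, {ℓ' : L | (P' ℓ').comp (A.comp (P ℓ)) ≠ 0}.Finite ∧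
      {ℓ' : L | (P' ℓ').comp (A.comp (P ℓ)) ≠ 0}.ncard ≤ R)
    -- the columns of the block support of `A` have at most `R` elements
    (hcol : ∀ ℓ' : L, {ℓ : L | (P' ℓ').comp (A.comp (P ℓ)) ≠ 0}.Finite ∧
      {ℓ : L | (P' ℓ').comp (A.comp (P ℓ)) ≠ 0}.ncard ≤ R)
    -- `c` oscillates by at most `δ` over the block support of `A`
    (hosc : ∀ ℓ' ℓ : L, (P' ℓ').comp (A.comp (P ℓ)) ≠ 0 → ‖c ℓ' - c ℓ‖ ≤ δ) :
    ‖M'.comp A - A.comp M‖ ≤ (R : ℝ) * δ * ‖A‖ := by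
  have hblocks : ∀ ℓ' ℓ x, ‖P' ℓ' ((M'.comp A - A.comp M) (P ℓ x))‖ ≤ δ * ‖P' ℓ' (A (P ℓ x))‖ := by
    intro ℓ' ℓ x
    have hblock := DFunLike.congr_fun (comp_commutator_comp_eq_smul (A := A) hP hP' hM hM' ℓ' ℓ) x
    simp only [ContinuousLinearMap.comp_apply, smul_apply] at hblock
    rw [hblock, norm_smul]
    by_cases hA : (P' ℓ').comp (A.comp (P ℓ)) = 0
    · simp [show P' ℓ' (A (P ℓ x)) = 0 from DFunLike.congr_fun hA x]
    · gcongr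
      exact hosc ℓ' ℓ hA
  calc ‖M'.comp A - A.comp M‖ ≤ √R * δ * ‖A‖ :=
        opNorm_le_sqrt_mul_of_blocks hP hP' (fun ℓ => (hrow ℓ).1) hcol hblocks hδ
    _ ≤ R * δ * ‖A‖ := by gcongr; exact Real.sqrt_natCast_le R

/-- **Block commutator estimate** (estimate (6.6) in the proof of Lemma 6.2 of
Bunke–Engel–Land): if the block support `S` of `A` has rows and columns of size at most `R`
and the multiplier `c` oscillates by at most `δ` over `S`, then
`‖M' ∘ A − A ∘ M‖ ≤ R·δ·‖A‖`. -/
theorem block_commutator_estimate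
    {L : Type*} {H H' : Type*}
    [NormedAddCommGroup H] [InnerProductSpace ℂ H] [CompleteSpace H]
    [NormedAddCommGroup H'] [InnerProductSpace ℂ H'] [CompleteSpace H']
    (P : L → (H →L[ℂ] H)) (P' : L → (H' →L[ℂ] H'))
    (hP : OrthogonalDecomposition P) (hP' : OrthogonalDecomposition P')
    (A : H →L[ℂ] H')
    (c : L → ℂ) (hc : ∃ C : ℝ, ∀ ℓ : L, ‖c ℓ‖ ≤ C)
    (M : H →L[ℂ] H) (M' : H' →L[ℂ] H')
    (hM : ∀ (ℓ : L) (v : H), P ℓ v = v → M v = c ℓ • v)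
    (hM' : ∀ (ℓ : L) (w : H'), P' ℓ w = w → M' w = c ℓ • w)
    (R : ℕ) (δ : ℝ) (hδ : 0 ≤ δ)
    -- the rows of the block support of `A` have at most `R` elements
    (hrow : ∀ ℓ : L, {ℓ' : L | (P' ℓ').comp (A.comp (P ℓ)) ≠ 0}.Finite ∧
      {ℓ' : L | (P' ℓ').comp (A.comp (P ℓ)) ≠ 0}.ncard ≤ R)
    -- the columns of the block support of `A` have at most `R` elements
    (hcol : ∀ ℓ' : L, {ℓ : L | (P' ℓ').comp (A.comp (P ℓ)) ≠ 0}.Finite ∧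
      {ℓ : L | (P' ℓ').comp (A.comp (P ℓ)) ≠ 0}.ncard ≤ R)
    -- `c` oscillates by at most `δ` over the block support of `A`
    (hosc : ∀ ℓ' ℓ : L, (P' ℓ').comp (A.comp (P ℓ)) ≠ 0 → ‖c ℓ' - c ℓ‖ ≤ δ) :
    ‖M'.comp A - A.comp M‖ ≤ (R : ℝ) * δ * ‖A‖ :=
  block_commutator_estimate_general P P' hP hP' A c M M' hM hM' R δ hδ hrow hcol hosc
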